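/- Let R be an affine root system (n = 1) of rank l in V, δ′ ∈ V⁰ ∖ {0} with ℤδ′ = (ℤR)⁰, Π′ ⊆ R with |Π′| = l such that π(Π′) is a base of π(R), and let α₀ ∈ R be the unique root such that Π₁ := Π′ ∪ {α₀} is a base of R and α₀ ∈ ℕδ′ + ℤΠ′. Then for every base Π₂ of R there exist ε ∈ {1,−1} and w ∈ W_{Π₁} such that Π₂ = εw(Π₁). -/

import Mathlib

/- ## Preliminaries: extended affine root systems (Saito) -/

noncomputable section

open Set

/-- The reflection `s_v : z ↦ z - (v^∨, z) v = z - (2 (v,z)/(v,v)) v` associated to a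
bilinear form `B` and a vector `v`.  (When `B v v = 0` this is the identity, by the
`division by zero = 0` convention; reflections are only ever used at non-isotropic `v`.) -/
def srefl {V : Type*} [AddCommGroup V] [Module ℝ V]
    (B : LinearMap.BilinForm ℝ V) (v : V) : Module.End ℝ V :=
  LinearMap.id - (((2 * (B v v)⁻¹) • (B v)).smulRight v)

/-- The Weyl group `W_S` generated by the reflections in the elements of `S`
(realized as the multiplicative closure; each generator is an involution, so this
agrees with the generated group). -/
def weyl {V : Type*} [AddCommGroup V] [Module ℝ V]
    (B : LinearMap.BilinForm ℝ V) (S : Set V) : Submonoid (Module.End ℝ V) :=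
  Submonoid.closure (srefl B '' S)

/-- The orbit `W_S · α`. -/
def worbit {V : Type*} [AddCommGroup V] [Module ℝ V]
    (B : LinearMap.BilinForm ℝ V) (S : Set V) (α : V) : Set V :=
  {v | ∃ w ∈ weyl B S, w α = v}

/-- `V⁰`, the set of isotropic vectors. -/
def nullSet {V : Type*} [AddCommGroup V] [Module ℝ V]
    (B : LinearMap.BilinForm ℝ V) : Set V := {v | B v v = 0}

/-- `ℤR`, the subgroup of `V` generated by `R`. -/
def zspan {V : Type*} [AddCommGroup V] (R : Set V) : AddSubgroup V :=
  AddSubgroup.closure R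

/-- `ℤ≥0 Π`, the set of nonnegative-integer linear combinations of elements of `Π`. -/
def nnspan {V : Type*} [AddCommMonoid V] (P : Set V) : Set V :=
  (AddSubmonoid.closure P : Set V)

/-- `(R, V)` is an `n`-extended affine root system of rank `l` (K. Saito). -/
structure IsEARS {V : Type*} [AddCommGroup V] [Module ℝ V]
    (B : LinearMap.BilinForm ℝ V) (R : Set V) (l n : ℕ) : Prop where
  rank_pos : 1 ≤ l
  findim : FiniteDimensional ℝ V
  symm : ∀ u v, B u v = B v u
  posSemidef : ∀ v, 0 ≤ B v v
  dim_eq : Module.finrank ℝ V = l + n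
  null_eq : nullSet B = (LinearMap.ker B : Set V)
  dim_null : Module.finrank ℝ (LinearMap.ker B) = n
  /-- (AX1), first half -/
  root_nonisotropic : ∀ α ∈ R, B α α ≠ 0
  /-- (AX1), second half -/
  span_eq_top : Submodule.span ℝ R = ⊤
  /-- (AX2) -/
  free : Module.Free ℤ (zspan R)
  /-- (AX2) -/
  rank_eq : Module.finrank ℤ (zspan R) = l + n
  /-- (AX3): `(α^∨, β) ∈ ℤ` -/
  integral : ∀ α ∈ R, ∀ β ∈ R, ∃ m : ℤ, 2 * B α β = (m : ℝ) * B α α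
  /-- (AX4) -/
  reflect : ∀ α ∈ R, srefl B α '' R = R
  /-- (AX5) -/
  connected : ∀ S' ⊆ R, S'.Nonempty → S' ≠ R → ∃ x ∈ S', ∃ y ∈ R \ S', B x y ≠ 0

/-- `R` is reduced, i.e. `R ∩ 2R = ∅`. -/
def IsReducedRS {V : Type*} [AddCommGroup V] [Module ℝ V] (R : Set V) : Prop :=
  ∀ α ∈ R, (2 : ℤ) • α ∉ R

/-- `Π₀` is a base (with `m` elements) of the root system `R₀`:
`Π₀ ⊆ R₀`, `Π₀` consists of `m` linearly independent elements, and
`R₀ = (R₀ ∩ ℤ≥0 Π₀) ∪ (R₀ ∩ ℤ≤0 Π₀)`. -/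
def IsBaseSet {M : Type*} [AddCommGroup M] [Module ℝ M] (R₀ P₀ : Set M) (m : ℕ) : Prop :=
  P₀ ⊆ R₀ ∧ P₀.Finite ∧ P₀.ncard = m ∧
  LinearIndependent ℝ ((↑) : P₀ → M) ∧
  R₀ = (R₀ ∩ nnspan P₀) ∪ (R₀ ∩ (-(nnspan P₀)))

/-- The bilinear form induced on a quotient `V ⧸ W` by a form vanishing on `W`. -/
def quotForm {V : Type*} [AddCommGroup V] [Module ℝ V]
    (W : Submodule ℝ V) (B : LinearMap.BilinForm ℝ V)
    (h1 : ∀ w ∈ W, B w = 0) (h2 : ∀ v : V, ∀ w ∈ W, B v w = 0) :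
    LinearMap.BilinForm ℝ (V ⧸ W) :=
  Submodule.liftQ W
    { toFun := fun v => Submodule.liftQ W (B v) (fun w hw => LinearMap.mem_ker.mpr (h2 v w hw))
      map_add' := fun u v => by
        ext x
        simp
      map_smul' := fun c v => by
        ext x
        simp }
    (fun w hw => by
      simp only [LinearMap.mem_ker]
      ext x
      simp [h1 w hw])

end

/-!
Coordinates with respect to `Π₁`, and with respect to `Π₂` or `-Π₂`, give linear forms `t₁`, `t₂`
that are nonnegative on the respective positive cones and positive on `δ'`. Roots with the same
pairings against `Π'` differ by an element of `ℤδ' = (ℤR)⁰`, and each pairing takes only finitely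
many values, so only finitely many roots are positive for `Π₁` and negative for `Π₂`. As long as
`Π₁` is not inside the positive cone of `Π₂`, some `α ∈ Π₁` is such an inversion, and replacing
`Π₂` by `s_α Π₂` removes `α` from the inversion set while permuting the rest, because `s_α`
permutes the positive roots other than the multiples of `α`. Once `Π₁` lies in the positive cone
of `Π₂`, the coordinates of each base in the other are nonnegative integers, which forces
`Π₂ = Π₁`.
-/

open Set Module

section NNSpan

variable {M : Type*} [AddCommMonoid M] {P Q : Set M}

theorem subset_nnspan (P : Set M) : P ⊆ nnspan P :=
  AddSubmonoid.subset_closure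

theorem nnspan_subset_nnspan (h : P ⊆ nnspan Q) : nnspan P ⊆ nnspan Q :=
  AddSubmonoid.closure_le.mpr h

theorem image_nnspan {N F : Type*} [AddCommMonoid N] [FunLike F M N] [AddMonoidHomClass F M N]
    (f : F) (P : Set M) : f '' nnspan P = nnspan (f '' P) := by
  rw [nnspan, ← AddSubmonoid.coe_map, AddMonoidHom.map_mclosure]
  rfl

theorem nnspan_neg {G : Type*} [AddCommGroup G] (P : Set G) : nnspan (-P) = -nnspan P := by
  simpa [Set.image_neg_eq_neg] using (image_nnspan (negAddMonoidHom : G →+ G) P).symm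

end NNSpan

section RootSystem

variable {V : Type*} [AddCommGroup V] [Module ℝ V]

section Reflection

variable {B : LinearMap.BilinForm ℝ V} {v : V}

theorem srefl_apply (B : LinearMap.BilinForm ℝ V) (v z : V) :
    srefl B v z = z - (2 * (B v v)⁻¹ * B v z) • v := by
  simp [srefl, mul_smul]

theorem srefl_smul_self (hv : B v v ≠ 0) (c : ℝ) : srefl B v (c • v) = -(c • v) := by
  rw [srefl_apply, map_smul, smul_eq_mul, show 2 * (B v v)⁻¹ * (c * B v v) = 2 * c by
    field_simp]
  module

theorem srefl_self (hv : B v v ≠ 0) : srefl B v v = -v := by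
  simpa using srefl_smul_self hv 1

theorem srefl_involutive (hv : B v v ≠ 0) : Function.Involutive (srefl B v) := by
  intro z
  have hB : B v (srefl B v z) = -B v z := by
    rw [srefl_apply, map_sub, map_smul, smul_eq_mul]
    field_simp
    ring
  rw [srefl_apply B v (srefl B v z), hB, srefl_apply]
  module

end Reflection

namespace Module.Basis

variable {ι ι' : Type*} (b : Basis ι ℝ V) {v : V}

theorem exists_natCast_repr_of_mem_nnspan (hv : v ∈ nnspan (range b)) (i : ι) :
    ∃ k : ℕ, b.repr v i = k := by
  classical
  induction hv using AddSubmonoid.closure_induction with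
  | mem x hx =>
    obtain ⟨j, rfl⟩ := hx
    rw [b.repr_self, Finsupp.single_apply]
    split_ifs
    exacts [⟨1, Nat.cast_one.symm⟩, ⟨0, Nat.cast_zero.symm⟩]
  | zero => exact ⟨0, by simp⟩
  | add x y _ _ hx hy =>
    obtain ⟨m, hm⟩ := hx
    obtain ⟨n, hn⟩ := hy
    exact ⟨m + n, by simp [hm, hn]⟩

theorem repr_nonneg_of_mem_nnspan (hv : v ∈ nnspan (range b)) (i : ι) : 0 ≤ b.repr v i := by
  obtain ⟨k, hk⟩ := b.exists_natCast_repr_of_mem_nnspan hv i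
  exact hk ▸ k.cast_nonneg

theorem eq_zero_of_mem_nnspan_of_neg_smul_mem {c : ℝ} (hc : 0 < c) (hv : v ∈ nnspan (range b))
    (hcv : -(c • v) ∈ nnspan (range b)) : v = 0 := by
  refine b.ext_elem fun i => ?_
  have h₁ := b.repr_nonneg_of_mem_nnspan hv i
  have h₂ := b.repr_nonneg_of_mem_nnspan hcv i
  simp only [map_neg, map_smul, Finsupp.neg_apply, Finsupp.smul_apply, smul_eq_mul] at h₂
  simp only [map_zero, Finsupp.coe_zero, Pi.zero_apply]
  nlinarith

theorem eq_zero_of_mem_nnspan_of_neg_mem (hv : v ∈ nnspan (range b))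
    (hv' : -v ∈ nnspan (range b)) : v = 0 :=
  b.eq_zero_of_mem_nnspan_of_neg_smul_mem one_pos hv (by rwa [one_smul])

noncomputable def height [Fintype ι] : V →ₗ[ℝ] ℝ := ∑ i, b.coord i

theorem height_apply [Fintype ι] : b.height v = ∑ i, b.repr v i := by
  simp [height]

theorem height_self [Fintype ι] (i : ι) : b.height (b i) = 1 := by
  classical
  simp [height_apply, Finsupp.single_apply]

theorem exists_natCast_height_of_mem_nnspan [Fintype ι] (hv : v ∈ nnspan (range b))
    (hv0 : v ≠ 0) : ∃ K : ℕ, 1 ≤ K ∧ b.height v = K := by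
  choose k hk using b.exists_natCast_repr_of_mem_nnspan hv
  refine ⟨∑ i, k i, Nat.one_le_iff_ne_zero.mpr fun h0 => hv0 (b.ext_elem fun i => ?_), by
    simp [height_apply, hk]⟩
  simp [hk, Finset.sum_eq_zero_iff.mp h0 i]

theorem mem_range_of_subset_nnspan [Fintype ι] [Fintype ι'] {b' : Basis ι' ℝ V}
    (h : range b ⊆ nnspan (range b')) (h' : range b' ⊆ nnspan (range b)) (j : ι') :
    b' j ∈ range b := by
  classical
  -- `b'`-heights of the `b i` are positive integers and that of `b' j` is `1`, so the
  -- (natural) `b`-coordinates of `b' j` sum to `1`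
  choose H hH1 hH using fun i =>
    b'.exists_natCast_height_of_mem_nnspan (h (mem_range_self i)) (b.ne_zero i)
  choose k hk using b.exists_natCast_repr_of_mem_nnspan (h' (mem_range_self j))
  have hkH : ∑ i, k i * H i = 1 := by
    have := b'.height_self j
    rw [← b.sum_repr (b' j), map_sum] at this
    simp only [map_smul, hk, hH, smul_eq_mul] at this
    exact_mod_cast this
  have hk1 : ∑ i, k i = 1 := by
    refine le_antisymm (hkH ▸ Finset.sum_le_sum fun i _ => Nat.le_mul_of_pos_right _ (hH1 i)) ?_
    refine Nat.one_le_iff_ne_zero.mpr fun h0 => ?_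
    simp [Finset.sum_eq_zero_iff.mp h0] at hkH
  obtain ⟨i, hi⟩ := (Finsupp.sum_eq_one_iff (Finsupp.equivFunOnFinite.symm k)).mp
    (by rwa [Finsupp.sum_fintype _ _ fun _ => rfl])
  refine ⟨i, b.ext_elem fun i' => ?_⟩
  have := congrArg (· i') hi
  simp only [Finsupp.coe_equivFunOnFinite_symm] at this
  simp [hk, this, Finsupp.single_apply]

theorem coord_pos_of_eq_zsmul_add {i : ι} {δ μ : V} {m : ℤ} (hm : 0 < m)
    (hμ : μ ∈ AddSubgroup.closure (b '' {i}ᶜ)) (h : b i = m • δ + μ) : 0 < b.coord i δ := by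
  classical
  have hμ0 : AddSubgroup.closure (b '' {i}ᶜ) ≤ (b.coord i).toAddMonoidHom.ker :=
    (AddSubgroup.closure_le _).mpr <| by
      rintro _ ⟨j, hj, rfl⟩
      simp [Ne.symm hj]
  have h1 := congrArg (b.coord i) h
  rw [map_add, map_zsmul, show b.coord i μ = 0 from hμ0 hμ, b.coord_apply, b.repr_self,
    Finsupp.single_eq_same, zsmul_eq_mul, add_zero] at h1
  exact pos_of_mul_pos_right (h1 ▸ one_pos) (by exact_mod_cast hm.le)

end Module.Basis

namespace IsBaseSet

variable {M : Type*} [AddCommGroup M] [Module ℝ M] {R P : Set M} {m : ℕ}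

theorem mem_nnspan_or_neg_mem (hP : IsBaseSet R P m) {x : M} (hx : x ∈ R) :
    x ∈ nnspan P ∨ -x ∈ nnspan P := by
  rw [hP.2.2.2.2] at hx
  exact hx.imp (·.2) (·.2)

theorem span_eq_top [FiniteDimensional ℝ M] (hP : IsBaseSet R P (finrank ℝ M)) :
    Submodule.span ℝ P = ⊤ := by
  have := hP.2.1.fintype
  simpa using hP.2.2.2.1.span_eq_top_of_card_eq_finrank'
    (by rw [← hP.2.2.1, ← Nat.card_coe_set_eq, Nat.card_eq_fintype_card])

theorem exists_basis [FiniteDimensional ℝ M] (hP : IsBaseSet R P (finrank ℝ M)) :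
    ∃ b : Basis P ℝ M, range b = P :=
  ⟨Basis.mk hP.2.2.2.1 (by simp [hP.span_eq_top]), by simp⟩

theorem image (hP : IsBaseSet R P m) (f : M →ₗ[ℝ] M) (hf : Function.Injective f)
    (hfR : f '' R = R) : IsBaseSet R (f '' P) m := by
  obtain ⟨hPR, hPfin, hPcard, hPli, hPdec⟩ := hP
  refine ⟨hfR ▸ image_mono hPR, hPfin.image f, hPcard ▸ ncard_image_of_injective P hf,
    LinearIndepOn.image hPli (by simp [LinearMap.ker_eq_bot.mpr hf]), ?_⟩
  calc R = f '' ((R ∩ nnspan P) ∪ (R ∩ -nnspan P)) := by rw [← hPdec, hfR]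
    _ = _ := by
      rw [image_union, image_inter hf, image_inter hf, hfR, image_neg, image_nnspan]

theorem neg (hP : IsBaseSet R P m) (hR : -R = R) : IsBaseSet R (-P) m := by
  simpa using hP.image (-LinearMap.id) neg_injective (by simpa using hR)

end IsBaseSet

def inversions (R P₁ P₂ : Set V) : Set V :=
  (R ∩ nnspan P₁) \ nnspan P₂

theorem finite_setOf_nonneg_nonpos_add_zsmul {δ : V} {t₁ t₂ : V →ₗ[ℝ] ℝ} (h₁ : 0 < t₁ δ)
    (h₂ : 0 < t₂ δ) (x : V) : {k : ℤ | 0 ≤ t₁ (x + k • δ) ∧ t₂ (x + k • δ) ≤ 0}.Finite := by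
  refine (finite_Icc ⌈-t₁ x / t₁ δ⌉ ⌊-t₂ x / t₂ δ⌋).subset fun k ⟨hk₁, hk₂⟩ =>
    ⟨Int.ceil_le.mpr ?_, Int.le_floor.mpr ?_⟩
  · rw [map_add, map_zsmul, zsmul_eq_mul] at hk₁
    rw [div_le_iff₀ h₁]
    linarith
  · rw [map_add, map_zsmul, zsmul_eq_mul] at hk₂
    rw [le_div_iff₀ h₂]
    linarith

namespace IsEARS

variable {B : LinearMap.BilinForm ℝ V} {R P P₁ P₂ : Set V} {l n : ℕ} {α x δ : V}

theorem ne_zero (hE : IsEARS B R l n) (hx : x ∈ R) : x ≠ 0 := by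
  rintro rfl
  exact hE.root_nonisotropic 0 hx (by simp)

theorem srefl_mem (hE : IsEARS B R l n) (hα : α ∈ R) (hx : x ∈ R) : srefl B α x ∈ R :=
  hE.reflect α hα ▸ mem_image_of_mem _ hx

theorem neg_mem (hE : IsEARS B R l n) (hx : x ∈ R) : -x ∈ R := by
  simpa [srefl_self (hE.root_nonisotropic _ hx)] using hE.srefl_mem hx hx

theorem neg_eq (hE : IsEARS B R l n) : -R = R :=
  Subset.antisymm (fun x hx => neg_neg x ▸ hE.neg_mem hx) fun _ => hE.neg_mem

theorem exists_basis (hE : IsEARS B R l n) (hP : IsBaseSet R P (l + n)) :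
    ∃ b : Basis P ℝ V, range b = P := by
  have := hE.findim
  exact (hE.dim_eq ▸ hP).exists_basis

theorem neg_notMem_nnspan (hE : IsEARS B R l n) (hP : IsBaseSet R P (l + n)) (hx : x ∈ R)
    (hxP : x ∈ nnspan P) : -x ∉ nnspan P := by
  obtain ⟨b, hb⟩ := hE.exists_basis hP
  rw [← hb] at hxP ⊢
  exact fun h => hE.ne_zero hx (b.eq_zero_of_mem_nnspan_of_neg_mem hxP h)

theorem smul_mem_nnspan (hE : IsEARS B R l n) (hP : IsBaseSet R P (l + n)) (hx : x ∈ R)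
    (hxP : x ∈ nnspan P) {c : ℝ} (hc : 0 < c) (hcx : c • x ∈ R) : c • x ∈ nnspan P := by
  obtain ⟨b, hb⟩ := hE.exists_basis hP
  refine (hP.mem_nnspan_or_neg_mem hcx).resolve_right fun h => hE.ne_zero hx ?_
  rw [← hb] at hxP h
  exact b.eq_zero_of_mem_nnspan_of_neg_smul_mem hc hxP h

theorem srefl_mem_nnspan (hE : IsEARS B R l n) (hP : IsBaseSet R P (l + n)) (hα : α ∈ P)
    (hx : x ∈ R) (hxP : x ∈ nnspan P) (hxα : ∀ c : ℝ, 0 < c → x ≠ c • α) :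
    srefl B α x ∈ nnspan P := by
  classical
  obtain ⟨b, hb⟩ := hE.exists_basis hP
  have hsx := hP.mem_nnspan_or_neg_mem (hE.srefl_mem (hP.1 hα) hx)
  rw [← hb] at hα hxP hsx ⊢
  obtain ⟨i, rfl⟩ := hα
  by_cases h : ∃ j ≠ i, b.repr x j ≠ 0
  · obtain ⟨j, hji, hj⟩ := h
    have hsj : b.repr (srefl B (b i) x) j = b.repr x j := by
      simp [srefl_apply, hji.symm]
    refine hsx.resolve_right fun hneg => hj ?_
    have h₁ := b.repr_nonneg_of_mem_nnspan hneg j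
    have h₂ := b.repr_nonneg_of_mem_nnspan hxP j
    rw [map_neg, Finsupp.neg_apply, hsj] at h₁
    linarith
  · push Not at h
    have hxi : x = b.repr x i • b i :=
      b.ext_elem fun j => by
        rcases eq_or_ne j i with rfl | hji
        · simp
        · simp [h j hji, hji.symm]
    refine absurd hxi (hxα _ (lt_of_le_of_ne (b.repr_nonneg_of_mem_nnspan hxP i) fun h0 => ?_))
    exact hE.ne_zero hx (by rw [hxi, ← h0, zero_smul])

theorem eq_of_subset_nnspan (hE : IsEARS B R l n) (hP₁ : IsBaseSet R P₁ (l + n))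
    (hP₂ : IsBaseSet R P₂ (l + n)) (h : P₁ ⊆ nnspan P₂) : P₂ = P₁ := by
  have h' : P₂ ⊆ nnspan P₁ := fun γ hγ =>
    (hP₁.mem_nnspan_or_neg_mem (hP₂.1 hγ)).resolve_right fun hneg =>
      hE.neg_notMem_nnspan hP₂ (hP₂.1 hγ) (subset_nnspan P₂ hγ) (nnspan_subset_nnspan h hneg)
  have := hP₁.2.1.fintype
  have := hP₂.2.1.fintype
  obtain ⟨b₁, hb₁⟩ := hE.exists_basis hP₁
  obtain ⟨b₂, hb₂⟩ := hE.exists_basis hP₂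
  rw [← hb₁, ← hb₂] at h h' ⊢
  exact (range_subset_iff.mpr (b₁.mem_range_of_subset_nnspan h h')).antisymm
    (range_subset_iff.mpr (b₂.mem_range_of_subset_nnspan h' h))

theorem srefl_image_inversions_subset (hE : IsEARS B R l n) (hP₁ : IsBaseSet R P₁ (l + n))
    (hP₂ : IsBaseSet R P₂ (l + n)) (hα : α ∈ P₁) (hα₂ : α ∉ nnspan P₂) :
    srefl B α '' inversions R P₁ (srefl B α '' P₂) ⊆ inversions R P₁ P₂ \ {α} := by
  rintro _ ⟨y, ⟨⟨hy, hy₁⟩, hy₂⟩, rfl⟩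
  have hαR := hP₁.1 hα
  have hαα := hE.root_nonisotropic α hαR
  have hsy₂ : srefl B α y ∉ nnspan P₂ := fun h =>
    hy₂ (by rw [← image_nnspan]; exact ⟨_, h, srefl_involutive hαα y⟩)
  refine ⟨⟨⟨hE.srefl_mem hαR hy, ?_⟩, hsy₂⟩, fun hyα => ?_⟩
  · refine hE.srefl_mem_nnspan hP₁ hα hy hy₁ fun c hc hyc => hsy₂ ?_
    -- `-α` is positive for `P₂`, hence so is its positive multiple `-y = s_α y`
    have hα₂' := (hP₂.mem_nnspan_or_neg_mem hαR).resolve_left hα₂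
    have := hE.smul_mem_nnspan hP₂ (hE.neg_mem hαR) hα₂' hc
      (by rw [smul_neg, ← hyc]; exact hE.neg_mem hy)
    rwa [hyc, srefl_smul_self hαα, ← smul_neg]
  · have : y = -α := by rw [← srefl_involutive hαα y, hyα, srefl_self hαα]
    exact hE.neg_notMem_nnspan hP₁ hαR (subset_nnspan P₁ hα) (this ▸ hy₁)

theorem exists_weyl_image_eq (hE : IsEARS B R l n) (hP₁ : IsBaseSet R P₁ (l + n))
    (hP₂ : IsBaseSet R P₂ (l + n)) (hfin : (inversions R P₁ P₂).Finite) :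
    ∃ w ∈ weyl B P₁, P₂ = w '' P₁ := by
  induction hN : (inversions R P₁ P₂).ncard using Nat.strong_induction_on generalizing P₂ with
  | _ N ih =>
  by_cases hsub : P₁ ⊆ nnspan P₂
  · exact ⟨1, one_mem _, by simp [hE.eq_of_subset_nnspan hP₁ hP₂ hsub]⟩
  obtain ⟨α, hα, hα₂⟩ := not_subset.mp hsub
  have hαR := hP₁.1 hα
  have hs := srefl_involutive (hE.root_nonisotropic α hαR)
  have hsub' := hE.srefl_image_inversions_subset hP₁ hP₂ hα hα₂
  have hαinv : α ∈ inversions R P₁ P₂ := ⟨⟨hαR, subset_nnspan P₁ hα⟩, hα₂⟩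
  have hlt : (inversions R P₁ (srefl B α '' P₂)).ncard < N :=
    calc _ = (srefl B α '' inversions R P₁ (srefl B α '' P₂)).ncard :=
          (ncard_image_of_injective _ hs.injective).symm
      _ ≤ (inversions R P₁ P₂ \ {α}).ncard := ncard_le_ncard hsub' hfin.sdiff
      _ < N := hN ▸ ncard_sdiff_singleton_lt_of_mem hαinv hfin
  obtain ⟨w, hw, hsw⟩ := ih _ hlt (hP₂.image _ hs.injective (hE.reflect α hαR))
    (Finite.of_finite_image (hfin.sdiff.subset hsub') hs.injective.injOn) rfl
  refine ⟨srefl B α * w, mul_mem (Submonoid.subset_closure (mem_image_of_mem _ hα)) hw, ?_⟩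
  rw [Module.End.coe_mul, image_comp, ← hsw, image_image]
  simp [hs _]

theorem exists_int_abs_le_four (hE : IsEARS B R l n) {γ : V} (hγ : γ ∈ R) (hx : x ∈ R) :
    ∃ k : ℤ, |k| ≤ 4 ∧ 2 * B γ x = k * B γ γ := by
  obtain ⟨k, hk⟩ := hE.integral γ hγ x hx
  obtain ⟨m, hm⟩ := hE.integral x hx γ hγ
  refine ⟨k, ?_, hk⟩
  have hγγ := lt_of_le_of_ne (hE.posSemidef γ) (hE.root_nonisotropic γ hγ).symm
  have hxx := lt_of_le_of_ne (hE.posSemidef x) (hE.root_nonisotropic x hx).symm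
  have hcs := B.apply_mul_apply_le_of_forall_zero_le hE.posSemidef γ x
  rw [hE.symm x γ] at hm hcs
  have hkm : (k * m : ℝ) * (B γ γ * B x x) = 4 * (B γ x * B γ x) := by
    linear_combination (-(m * B x x)) * hk - (2 * B γ x) * hm
  have hkm4 : k * m ≤ 4 := by
    have : (k * m : ℝ) ≤ 4 := le_of_mul_le_mul_right (by nlinarith) (mul_pos hγγ hxx)
    exact_mod_cast this
  have hkm0 : 0 ≤ k * m := by
    have : (0 : ℝ) ≤ k * m := nonneg_of_mul_nonneg_left (by nlinarith) (mul_pos hγγ hxx)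
    exact_mod_cast this
  rcases eq_or_ne m 0 with rfl | hm0
  · have hkγ : (k : ℝ) * B γ γ = 0 := by rw [← hk]; simpa using hm
    simp [Int.cast_eq_zero.mp ((mul_eq_zero.mp hkγ).resolve_right hγγ.ne')]
  · calc |k| ≤ |k| * |m| := le_mul_of_one_le_right (abs_nonneg k) (Int.one_le_abs hm0)
      _ = k * m := by rw [← abs_mul, abs_of_nonneg hkm0]
      _ ≤ 4 := hkm4

theorem finite_image_apply (hE : IsEARS B R l n) {γ : V} (hγ : γ ∈ R) : (B γ '' R).Finite := by
  refine ((finite_Icc (-4 : ℤ) 4).image fun k : ℤ => (k : ℝ) * B γ γ / 2).subset ?_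
  rintro _ ⟨x, hx, rfl⟩
  obtain ⟨k, hk, hkx⟩ := hE.exists_int_abs_le_four hγ hx
  exact ⟨k, abs_le.mp hk, by linarith⟩

theorem exists_eq_add_zsmul (hE : IsEARS B R l n) {δ : V}
    (hδ : (AddSubgroup.closure {δ} : Set V) = (zspan R : Set V) ∩ nullSet B)
    (hsp : Submodule.span ℝ P ⊔ LinearMap.ker B = ⊤) {y : V} (hx : x ∈ R) (hy : y ∈ R)
    (hxy : ∀ p ∈ P, B p x = B p y) : ∃ k : ℤ, x = y + k • δ := by
  have hker : x - y ∈ LinearMap.ker B := by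
    have h : Submodule.span ℝ P ⊔ LinearMap.ker B ≤ LinearMap.ker (B.flip (x - y)) :=
      sup_le (Submodule.span_le.mpr fun p hp => by simp [hxy p hp])
        fun z hz => by simp [LinearMap.mem_ker.mp hz]
    rw [hsp] at h
    exact LinearMap.ext fun v => (hE.symm _ v).trans (h Submodule.mem_top)
  have hδxy : x - y ∈ (AddSubgroup.closure {δ} : Set V) :=
    hδ ▸ ⟨sub_mem (AddSubgroup.subset_closure hx) (AddSubgroup.subset_closure hy),
      hE.null_eq ▸ hker⟩
  obtain ⟨k, hk⟩ := AddSubgroup.mem_closure_singleton.mp hδxy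
  exact ⟨k, by rw [hk, add_sub_cancel]⟩

theorem finite_setOf_nonneg_nonpos (hE : IsEARS B R l n)
    (hδ : (AddSubgroup.closure {δ} : Set V) = (zspan R : Set V) ∩ nullSet B)
    (hPR : P ⊆ R) (hPfin : P.Finite) (hsp : Submodule.span ℝ P ⊔ LinearMap.ker B = ⊤)
    {t₁ t₂ : V →ₗ[ℝ] ℝ} (h₁ : 0 < t₁ δ) (h₂ : 0 < t₂ δ) :
    {x ∈ R | 0 ≤ t₁ x ∧ t₂ x ≤ 0}.Finite := by
  have := hPfin.to_subtype
  refine Finite.of_finite_fibers (fun x (p : P) => B p x) ?_ ?_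
  · refine (Finite.pi' fun p : P => hE.finite_image_apply (hPR p.2)).subset ?_
    rintro _ ⟨x, hx, rfl⟩ p
    exact ⟨x, hx.1, rfl⟩
  · rintro _ ⟨y, ⟨hy, -⟩, rfl⟩
    refine ((finite_setOf_nonneg_nonpos_add_zsmul h₁ h₂ y).image fun k : ℤ => y + k • δ).subset ?_
    rintro x ⟨⟨hx, hxt⟩, hxy⟩
    obtain ⟨k, rfl⟩ := hE.exists_eq_add_zsmul hδ hsp hx hy fun p hp => congrFun hxy ⟨p, hp⟩
    exact ⟨k, hxt, rfl⟩

theorem finite_inversions (hE : IsEARS B R l n)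
    (hδ : (AddSubgroup.closure {δ} : Set V) = (zspan R : Set V) ∩ nullSet B)
    (hPR : P ⊆ R) (hPfin : P.Finite) (hsp : Submodule.span ℝ P ⊔ LinearMap.ker B = ⊤)
    (hP₂ : IsBaseSet R P₂ (l + n)) {t₁ t₂ : V →ₗ[ℝ] ℝ} (ht₁ : ∀ x ∈ nnspan P₁, 0 ≤ t₁ x)
    (ht₂ : ∀ x ∈ nnspan P₂, 0 ≤ t₂ x) (h₁ : 0 < t₁ δ) (h₂ : 0 < t₂ δ) :
    (inversions R P₁ P₂).Finite := by
  refine (hE.finite_setOf_nonneg_nonpos hδ hPR hPfin hsp h₁ h₂).subset ?_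
  rintro x ⟨⟨hx, hx₁⟩, hx₂⟩
  have := ht₂ _ ((hP₂.mem_nnspan_or_neg_mem hx).resolve_left hx₂)
  exact ⟨hx, ht₁ x hx₁, by simpa using this⟩

theorem exists_sign_weyl_image_eq (hE : IsEARS B R l n)
    (hδ : (AddSubgroup.closure {δ} : Set V) = (zspan R : Set V) ∩ nullSet B)
    (hPR : P ⊆ R) (hPfin : P.Finite) (hsp : Submodule.span ℝ P ⊔ LinearMap.ker B = ⊤)
    (hP₁ : IsBaseSet R P₁ (l + n)) (hP₂ : IsBaseSet R P₂ (l + n)) {t₁ : V →ₗ[ℝ] ℝ}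
    (ht₁ : ∀ x ∈ nnspan P₁, 0 ≤ t₁ x) (h₁ : 0 < t₁ δ) :
    ∃ (ε : ℝ) (w : Module.End ℝ V), (ε = 1 ∨ ε = -1) ∧
      w ∈ weyl B P₁ ∧ P₂ = (fun v => ε • w v) '' P₁ := by
  obtain ⟨b, hb⟩ := hE.exists_basis hP₂
  obtain ⟨j, hj⟩ : ∃ j, b.repr δ j ≠ 0 := by
    by_contra! h
    exact h₁.ne' (by simp [b.ext_elem (y := 0) fun j => by simpa using h j])
  rcases hj.lt_or_gt with hneg | hpos
  · have hfin := hE.finite_inversions hδ hPR hPfin hsp (hP₂.neg hE.neg_eq) (t₂ := -b.coord j) ht₁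
      (fun x hx => by
        rw [nnspan_neg, ← hb] at hx
        simpa using b.repr_nonneg_of_mem_nnspan hx j)
      h₁ (by simpa using hneg)
    obtain ⟨w, hw, hPw⟩ := hE.exists_weyl_image_eq hP₁ (hP₂.neg hE.neg_eq) hfin
    refine ⟨-1, w, Or.inr rfl, hw, ?_⟩
    rw [← neg_neg P₂, hPw, ← image_neg_eq_neg, image_image]
    simp
  · have hfin := hE.finite_inversions hδ hPR hPfin hsp hP₂ (t₂ := b.coord j) ht₁
      (fun x hx => b.repr_nonneg_of_mem_nnspan (hb.symm ▸ hx) j) h₁ hpos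
    obtain ⟨w, hw, hPw⟩ := hE.exists_weyl_image_eq hP₁ hP₂ hfin
    exact ⟨1, w, Or.inl rfl, hw, by simpa using hPw⟩

end IsEARS

end RootSystem

theorem stmt4_general {V : Type*} [AddCommGroup V] [Module ℝ V]
    (B : LinearMap.BilinForm ℝ V) (R : Set V) (l : ℕ)
    (hE : IsEARS B R l 1)
    (δ' : V)
    (hδgen : (AddSubgroup.closure {δ'} : Set V) = (zspan R : Set V) ∩ nullSet B)
    (P' : Set V) (hP'R : P' ⊆ R) (hP'card : P'.ncard = l)
    (hP'base : IsBaseSet ((LinearMap.ker B).mkQ '' R) ((LinearMap.ker B).mkQ '' P') l)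
    (α₀ : V) (hα₀base : IsBaseSet R (insert α₀ P') (l + 1))
    (hα₀pos : ∃ m : ℕ, 0 < m ∧ ∃ μ ∈ AddSubgroup.closure P', α₀ = (m : ℤ) • δ' + μ)
    (P₂ : Set V) (hP₂ : IsBaseSet R P₂ (l + 1)) :
    ∃ (ε : ℝ) (w : Module.End ℝ V), (ε = 1 ∨ ε = -1) ∧
      w ∈ weyl B (insert α₀ P') ∧ P₂ = (fun v => ε • w v) '' (insert α₀ P') := by
  have := hE.findim
  have hα₀P' : α₀ ∉ P' := fun h => by
    have := hα₀base.2.2.1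
    rw [insert_eq_of_mem h, hP'card] at this
    omega
  have hsp : Submodule.span ℝ P' ⊔ LinearMap.ker B = ⊤ := by
    have hfr := Submodule.finrank_quotient_add_finrank (LinearMap.ker B)
    rw [hE.dim_eq, hE.dim_null, Nat.add_right_cancel_iff] at hfr
    rw [sup_comm, ← Submodule.map_mkQ_eq_top, Submodule.map_span]
    exact (hfr ▸ hP'base).span_eq_top
  obtain ⟨b, hb⟩ := hE.exists_basis hα₀base
  obtain ⟨i₀, hi₀⟩ : α₀ ∈ range b := hb.symm ▸ mem_insert α₀ P'
  have hP'b : P' ⊆ b '' {i₀}ᶜ := fun p hp => by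
    obtain ⟨j, rfl⟩ : p ∈ range b := hb.symm ▸ mem_insert_of_mem α₀ hp
    exact ⟨j, fun hj => hα₀P' (hi₀ ▸ hj ▸ hp), rfl⟩
  obtain ⟨m, hm, μ, hμ, hα₀⟩ := hα₀pos
  exact hE.exists_sign_weyl_image_eq hδgen hP'R (hα₀base.2.1.subset (subset_insert α₀ P')) hsp
    hα₀base hP₂ (fun x hx => b.repr_nonneg_of_mem_nnspan (hb.symm ▸ hx) i₀)
    (b.coord_pos_of_eq_zsmul_add (by exact_mod_cast hm) (AddSubgroup.closure_mono hP'b hμ)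
      (hi₀ ▸ hα₀))

/-- Any two bases of an affine root system agree up to sign and the
Weyl group of the distinguished base `Π₁ = Π′ ∪ {α₀}`. -/
theorem stmt4 {V : Type*} [AddCommGroup V] [Module ℝ V]
    (B : LinearMap.BilinForm ℝ V) (R : Set V) (l : ℕ)
    (hE : IsEARS B R l 1)
    (δ' : V) (hδ0 : δ' ≠ 0) (hδiso : B δ' δ' = 0)
    (hδgen : (AddSubgroup.closure {δ'} : Set V) = (zspan R : Set V) ∩ nullSet B)
    (P' : Set V) (hP'R : P' ⊆ R) (hP'card : P'.ncard = l)
    (hP'base : IsBaseSet ((LinearMap.ker B).mkQ '' R) ((LinearMap.ker B).mkQ '' P') l)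
    (α₀ : V) (hα₀R : α₀ ∈ R) (hα₀base : IsBaseSet R (insert α₀ P') (l + 1))
    (hα₀pos : ∃ m : ℕ, 0 < m ∧ ∃ μ ∈ AddSubgroup.closure P', α₀ = (m : ℤ) • δ' + μ)
    (P₂ : Set V) (hP₂ : IsBaseSet R P₂ (l + 1)) :
    ∃ (ε : ℝ) (w : Module.End ℝ V), (ε = 1 ∨ ε = -1) ∧
      w ∈ weyl B (insert α₀ P') ∧ P₂ = (fun v => ε • w v) '' (insert α₀ P') :=
  stmt4_general B R l hE δ' hδgen P' hP'R hP'card hP'base α₀ hα₀base hα₀pos P₂ hP₂
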